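/- arXiv:math/0507281 — 3 statements merged into one kernel-verified Lean document; each statement's English description precedes it below -/
import Mathlib

section
/- Let n ≥ 2 be an integer. There exists ε > 0 such that for all real numbers r_1, …, r_{2n+1} with 0 < r_i < ε for all i, one has (2^{2n}/π)·Σ_{k=1}^∞ (sin(k r_1)⋯sin(k r_{2n+1}))/k^{2n−1} = −(1/(2·(2n−2)!))·Σ_{I ⊆ {1,…,2n+1}, |I| odd} sign(r_I − r_{Ī})·(r_I − r_{Ī})^{2n−2}. -/
/-!
Expanding `∏ⱼ (e^{i aⱼ} - e^{-i aⱼ})` over subsets and pairing each subset `I` with its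
complement writes the product of the `2n+1` sines as `(-4)⁻ⁿ ∑_{|I| odd} sin (a_I - a_Ī)`.
The series thus becomes a combination of the Fourier series `∑ₖ sin (k t) / k^{2n-1}`, which for
`|t| ≤ 2π` is a multiple of `sign t · B_{2n-1}(|t| / 2π)`. In the Bernoulli polynomial every
monomial except the `B₁` one contributes an odd power `tᵖ` with `p < 2n+1`, and
`∑_{|I| odd} (r_I - r_Ī)ᵖ` vanishes for such `p`: up to sign it is the iterated difference
`∑_{I} (-1)^{|I|} (2 r_I - r)ᵖ` of a polynomial of degree below the number of variables.
Only the term `sign t · t^{2n-2}` coming from `B₁` survives.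
-/

open Real Finset
open scoped Nat

theorem Finset.sum_powerset_neg_one_pow_card_mul_add_sum_pow {α R : Type*} [DecidableEq α]
    [CommRing R] (c : R) (x : α → R) (s : Finset α) {j : ℕ} (hj : j < #s) :
    ∑ t ∈ s.powerset, (-1) ^ #t * (c + ∑ i ∈ t, x i) ^ j = 0 := by
  induction s using Finset.induction_on generalizing j with
  | empty => simp at hj
  | @insert a s ha ih =>
    rw [card_insert_of_notMem ha] at hj
    have hstep : ∀ t ∈ s.powerset, (-1) ^ #(insert a t) * (c + ∑ i ∈ insert a t, x i) ^ j =
        -((-1) ^ #t * (c + ∑ i ∈ t, x i) ^ j) -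
          ∑ k ∈ range j, (j.choose k * x a ^ (j - k)) * ((-1) ^ #t * (c + ∑ i ∈ t, x i) ^ k) := by
      intro t ht
      have hat : a ∉ t := fun h => ha (mem_powerset.mp ht h)
      rw [card_insert_of_notMem hat, sum_insert hat,
        show c + (x a + ∑ i ∈ t, x i) = (c + ∑ i ∈ t, x i) + x a by ring, add_pow,
        sum_range_succ, mul_add, mul_sum, sub_eq_add_neg, ← sum_neg_distrib, add_comm]
      simp only [Nat.choose_self, Nat.sub_self, pow_zero, Nat.cast_one, mul_one, pow_succ]
      congr 1
      · ring
      · exact sum_congr rfl fun k _ => by ring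
    rw [sum_powerset_insert ha, sum_congr rfl hstep, sum_sub_distrib, sum_neg_distrib,
      sum_comm, ← add_sub_assoc, add_neg_cancel, zero_sub, neg_eq_zero]
    exact sum_eq_zero fun k hk => by
      rw [← mul_sum, ih (by have := mem_range.mp hk; omega), mul_zero]

theorem Fintype.sum_eq_sum_filter_odd_card_add_compl {α M : Type*} [Fintype α] [DecidableEq α]
    [AddCommMonoid M] (hα : Odd (Fintype.card α)) (f : Finset α → M) :
    ∑ t, f t = ∑ t with Odd #t, (f t + f tᶜ) := by
  rw [sum_add_distrib, ← sum_filter_add_sum_filter_not univ (fun t : Finset α => Odd #t)]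
  congr 1
  refine sum_bij' (fun t _ => tᶜ) (fun t _ => tᶜ) ?_ ?_ (fun t _ => compl_compl t)
    (fun t _ => compl_compl t) (fun t _ => by rw [compl_compl])
  all_goals
    intro t ht
    simp only [mem_filter, mem_univ, true_and, Nat.not_odd_iff_even, card_compl] at ht ⊢
  · exact Nat.Odd.sub_even (card_le_univ t) hα ht
  · exact Nat.Odd.sub_odd hα ht

theorem Fintype.sum_filter_odd_card_sum_sub_sum_compl_pow {α R : Type*} [Fintype α]
    [DecidableEq α] [CommRing R] [NoZeroDivisors R] [CharZero R] (hα : Odd (Fintype.card α))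
    (x : α → R) {p : ℕ} (hp : Odd p) (hpα : p < Fintype.card α) :
    ∑ t with Odd #t, (∑ i ∈ t, x i - ∑ i ∈ tᶜ, x i) ^ p = 0 := by
  have hcompl (t : Finset α) : ∑ i ∈ t, x i - ∑ i ∈ tᶜ, x i = -∑ i, x i + ∑ i ∈ t, 2 * x i := by
    rw [← sum_add_sum_compl t x, ← mul_sum]; ring
  have hvanish := sum_powerset_neg_one_pow_card_mul_add_sum_pow (-∑ i, x i) (2 * x ·) univ
    (j := p) (by simpa using hpα)
  rw [powerset_univ, Fintype.sum_eq_sum_filter_odd_card_add_compl hα] at hvanish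
  rw [← neg_eq_zero, ← (mul_right_injective₀ (two_ne_zero' R)).eq_iff, mul_zero, ← hvanish,
    ← sum_neg_distrib, mul_sum]
  refine Finset.sum_congr rfl fun t ht => ?_
  have htodd : Odd #t := (mem_filter.mp ht).2
  have htc : Even #tᶜ := by rw [card_compl]; exact Nat.Odd.sub_odd hα htodd
  rw [← hcompl, ← hcompl, compl_compl, htodd.neg_one_pow, htc.neg_one_pow,
    ← neg_sub, hp.neg_pow]
  ring

theorem abs_sum_sub_sum_compl_le {α : Type*} [Fintype α] [DecidableEq α] (x : α → ℝ)
    (t : Finset α) : |∑ i ∈ t, x i - ∑ i ∈ tᶜ, x i| ≤ ∑ i, |x i| := by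
  rw [← sum_add_sum_compl t (|x ·|)]
  exact (abs_sub _ _).trans (add_le_add (abs_sum_le_sum_abs _ _) (abs_sum_le_sum_abs _ _))

theorem Complex.two_mul_I_mul_sin (z : ℂ) :
    2 * I * sin z = exp (z * I) - exp (-(z * I)) := by
  rw [sin, neg_mul]
  linear_combination (exp (-(z * I)) - exp (z * I)) * I_sq

theorem Complex.neg_four_pow_mul_prod_sin {α : Type*} [Fintype α] [DecidableEq α] {n : ℕ}
    (hα : Fintype.card α = 2 * n + 1) (a : α → ℂ) :
    (-4) ^ n * ∏ i, sin (a i) = ∑ t with Odd #t, sin (∑ i ∈ t, a i - ∑ i ∈ tᶜ, a i) := by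
  have hodd : Odd (Fintype.card α) := hα ▸ odd_two_mul_add_one n
  have hcompl (t : Finset α) : ∑ i ∈ tᶜ, a i - ∑ i ∈ t, a i = -(∑ i ∈ t, a i - ∑ i ∈ tᶜ, a i) := by
    ring
  have hexpand : ∏ i, (exp (a i * I) - exp (-(a i * I))) =
      ∑ t, (-1) ^ #t * exp (-((∑ i ∈ t, a i - ∑ i ∈ tᶜ, a i) * I)) := by
    rw [Finset.prod_sub, powerset_univ]
    refine Finset.sum_congr rfl fun t _ => ?_
    rw [mul_assoc, ← compl_eq_univ_sdiff, ← exp_sum, ← exp_sum, ← exp_add, sum_neg_distrib,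
      ← sum_mul, ← sum_mul]
    ring_nf
  have hpair : ∀ t ∈ univ.filter (fun t : Finset α => Odd #t),
      (-1) ^ #t * exp (-((∑ i ∈ t, a i - ∑ i ∈ tᶜ, a i) * I)) +
        (-1) ^ #tᶜ * exp (-((∑ i ∈ tᶜ, a i - ∑ i ∈ tᶜᶜ, a i) * I)) =
      2 * I * sin (∑ i ∈ t, a i - ∑ i ∈ tᶜ, a i) := by
    intro t ht
    have htodd : Odd #t := (mem_filter.mp ht).2
    have htc : Even #tᶜ := by rw [card_compl]; exact Nat.Odd.sub_odd hodd htodd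
    rw [two_mul_I_mul_sin, compl_compl, hcompl, htodd.neg_one_pow, htc.neg_one_pow]
    ring_nf
  have hsum := (Fintype.sum_eq_sum_filter_odd_card_add_compl hodd _).symm.trans hexpand.symm
  rw [Finset.sum_congr rfl hpair, ← mul_sum] at hsum
  rw [Finset.prod_congr rfl fun i _ => (two_mul_I_mul_sin (a i)).symm, prod_mul_distrib,
    prod_const, card_univ, hα, pow_succ, pow_mul, mul_pow, I_sq] at hsum
  have h2I : (2 * I : ℂ) ≠ 0 := by simp
  apply mul_left_cancel₀ h2I
  linear_combination -hsum

theorem Real.neg_four_pow_mul_prod_sin {α : Type*} [Fintype α] [DecidableEq α] {n : ℕ}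
    (hα : Fintype.card α = 2 * n + 1) (a : α → ℝ) :
    (-4) ^ n * ∏ i, sin (a i) = ∑ t with Odd #t, sin (∑ i ∈ t, a i - ∑ i ∈ tᶜ, a i) := by
  exact_mod_cast Complex.neg_four_pow_mul_prod_sin hα (fun i => (a i : ℂ))

theorem Real.sign_mul_abs_pow_of_odd {p : ℕ} (hp : Odd p) (x : ℝ) : sign x * |x| ^ p = x ^ p := by
  rcases lt_trichotomy x 0 with hx | rfl | hx
  · rw [sign_of_neg hx, abs_of_neg hx, hp.neg_pow, neg_one_mul, neg_neg]
  · simp [hp.pos.ne']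
  · rw [sign_of_pos hx, abs_of_pos hx, one_mul]

theorem bernoulliFun_eq_sum (k : ℕ) (x : ℝ) :
    bernoulliFun k x = ∑ j ∈ range (k + 1), (bernoulli j * k.choose j : ℝ) * x ^ (k - j) := by
  simp only [bernoulliFun, Polynomial.bernoulli, Polynomial.map_sum, Polynomial.eval_finsetSum,
    Polynomial.map_monomial, Polynomial.eval_monomial, eq_ratCast, Rat.cast_mul, Rat.cast_natCast]

theorem sign_mul_bernoulliFun_odd_abs_div (m : ℕ) (x : ℝ) (L : ℝ) :
    sign x * bernoulliFun (2 * m + 1) (|x| / L) =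
      ∑ j ∈ range (2 * m + 2) with Even j,
        (bernoulli j * (2 * m + 1).choose j : ℝ) * (x / L) ^ (2 * m + 1 - j) -
      (2 * m + 1) / 2 * (sign x * x ^ (2 * m)) / L ^ (2 * m) := by
  rw [bernoulliFun_eq_sum, mul_sum, ← sum_filter_add_sum_filter_not _ Even, sub_eq_add_neg]
  congr 1
  · refine Finset.sum_congr rfl fun j hj => ?_
    obtain ⟨hj, hjeven⟩ := mem_filter.mp hj
    have hodd : Odd (2 * m + 1 - j) :=
      Nat.Odd.sub_even (Nat.lt_succ_iff.mp (mem_range.mp hj)) (odd_two_mul_add_one m) hjeven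
    rw [div_pow, div_pow, ← sign_mul_abs_pow_of_odd hodd x]
    ring
  · have h1 : 1 ∈ (range (2 * m + 2)).filter (¬Even ·) := by simp
    rw [sum_eq_single_of_mem 1 h1]
    · rw [bernoulli_one, Nat.choose_one_right, Nat.add_sub_cancel, div_pow, (even_two_mul m).pow_abs]
      push_cast
      ring
    · intro j hj hj1
      have hjodd : Odd j := Nat.not_even_iff_odd.mp (mem_filter.mp hj).2
      rw [bernoulli_eq_zero_of_odd hjodd (by have := hjodd.pos; omega)]
      simp

theorem Fintype.sum_filter_odd_card_sign_mul_bernoulliFun {α : Type*} [Fintype α] [DecidableEq α]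
    (hα : Odd (Fintype.card α)) {m : ℕ} (hm : 2 * m + 1 < Fintype.card α) (x : α → ℝ) (L : ℝ) :
    ∑ t with Odd #t, sign (∑ i ∈ t, x i - ∑ i ∈ tᶜ, x i) *
        bernoulliFun (2 * m + 1) (|∑ i ∈ t, x i - ∑ i ∈ tᶜ, x i| / L) =
      -((2 * m + 1) / 2 / L ^ (2 * m)) *
        ∑ t with Odd #t, sign (∑ i ∈ t, x i - ∑ i ∈ tᶜ, x i) *
          (∑ i ∈ t, x i - ∑ i ∈ tᶜ, x i) ^ (2 * m) := by
  have hodd_part : ∑ t with Odd #t, ∑ j ∈ range (2 * m + 2) with Even j,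
      (bernoulli j * (2 * m + 1).choose j : ℝ) *
        ((∑ i ∈ t, x i - ∑ i ∈ tᶜ, x i) / L) ^ (2 * m + 1 - j) = 0 := by
    rw [Finset.sum_comm]
    refine Finset.sum_eq_zero fun j hj => ?_
    obtain ⟨hj, hjeven⟩ := mem_filter.mp hj
    have hodd : Odd (2 * m + 1 - j) :=
      Nat.Odd.sub_even (Nat.lt_succ_iff.mp (mem_range.mp hj)) (odd_two_mul_add_one m) hjeven
    simp_rw [div_pow, ← mul_div_assoc, ← sum_div, ← mul_sum,
      sum_filter_odd_card_sum_sub_sum_compl_pow hα x hodd (by omega), mul_zero, zero_div]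
  simp_rw [sign_mul_bernoulliFun_odd_abs_div, sum_sub_distrib, hodd_part, mul_sum]
  refine (zero_sub _).trans ?_
  rw [← sum_neg_distrib]
  exact Finset.sum_congr rfl fun t _ => by ring

theorem Real.sin_mul_eq_sign_mul_sin_mul_abs (c t : ℝ) : sin (c * t) = sign t * sin (c * |t|) := by
  rcases lt_trichotomy t 0 with ht | rfl | ht
  · rw [sign_of_neg ht, abs_of_neg ht, mul_neg, sin_neg, neg_one_mul, neg_neg]
  · simp
  · rw [sign_of_pos ht, abs_of_pos ht, one_mul]

theorem Real.hasSum_sin_succ_mul_div_pow {m : ℕ} (hm : m ≠ 0) {t : ℝ} (ht : |t| ≤ 2 * π) :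
    HasSum (fun k : ℕ => sin ((k + 1) * t) / ((k : ℝ) + 1) ^ (2 * m + 1))
      ((-1) ^ (m + 1) * (2 * π) ^ (2 * m + 1) / 2 / (2 * m + 1)! *
        (sign t * bernoulliFun (2 * m + 1) (|t| / (2 * π)))) := by
  have hx : |t| / (2 * π) ∈ Set.Icc (0 : ℝ) 1 :=
    ⟨by positivity, (div_le_one (by positivity)).mpr ht⟩
  have habs := (hasSum_nat_add_iff' 1).mpr (hasSum_one_div_nat_pow_mul_sin hm hx)
  simp only [range_one, sum_singleton, Nat.cast_zero, mul_zero, zero_mul, sin_zero,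
    sub_zero, Nat.cast_add, Nat.cast_one] at habs
  have hterm (k : ℕ) : sin ((k + 1) * t) / ((k : ℝ) + 1) ^ (2 * m + 1) =
      sign t * (1 / ((k : ℝ) + 1) ^ (2 * m + 1) * sin (2 * π * (k + 1) * (|t| / (2 * π)))) := by
    rw [sin_mul_eq_sign_mul_sin_mul_abs]
    field_simp
  simp only [hterm, bernoulliFun, mul_left_comm _ (sign t)]
  exact habs.mul_left (sign t)

theorem Real.hasSum_prod_sin_succ_mul_div_pow {α : Type*} [Fintype α] [DecidableEq α] {m : ℕ}
    (hm : m ≠ 0) (hα : Fintype.card α = 2 * (m + 1) + 1) (x : α → ℝ)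
    (hx : ∑ i, |x i| ≤ 2 * π) :
    HasSum (fun k : ℕ => (∏ i, sin ((k + 1) * x i)) / ((k : ℝ) + 1) ^ (2 * m + 1))
      (-(π / (2 ^ (2 * m + 3) * (2 * m)!)) *
        ∑ t with Odd #t, sign (∑ i ∈ t, x i - ∑ i ∈ tᶜ, x i) *
          (∑ i ∈ t, x i - ∑ i ∈ tᶜ, x i) ^ (2 * m)) := by
  have hodd : Odd (Fintype.card α) := hα ▸ odd_two_mul_add_one _
  have hprod (k : ℕ) : (∏ i, sin ((k + 1) * x i)) / ((k : ℝ) + 1) ^ (2 * m + 1) =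
      ((-4) ^ (m + 1))⁻¹ * ∑ t with Odd #t,
        sin ((k + 1) * (∑ i ∈ t, x i - ∑ i ∈ tᶜ, x i)) / ((k : ℝ) + 1) ^ (2 * m + 1) := by
    rw [← sum_div, ← mul_div_assoc]
    congr 1
    rw [eq_inv_mul_iff_mul_eq₀ (by norm_num), neg_four_pow_mul_prod_sin hα]
    simp_rw [mul_sub, mul_sum]
  have hseries := (hasSum_sum (s := univ.filter (Odd #·)) fun t _ => hasSum_sin_succ_mul_div_pow hm
    ((abs_sum_sub_sum_compl_le x t).trans hx)).mul_left ((-4) ^ (m + 1))⁻¹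
  have hconst : ((-4) ^ (m + 1))⁻¹ * ((-1) ^ (m + 1) * (2 * π) ^ (2 * m + 1) / 2 / (2 * m + 1)!) *
      -((2 * m + 1) / 2 / (2 * π) ^ (2 * m)) = -(π / (2 ^ (2 * m + 3) * (2 * m)!)) := by
    have h4 : (-4 : ℝ) ^ (m + 1) = (-1) ^ (m + 1) * 2 ^ (2 * m + 2) := by
      rw [neg_eq_neg_one_mul, mul_pow, show 2 * m + 2 = 2 * (m + 1) by ring, pow_mul]
      norm_num
    rw [h4, Nat.factorial_succ, pow_succ _ (2 * m)]
    push_cast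
    field_simp
    ring
  rwa [← mul_sum, Fintype.sum_filter_odd_card_sign_mul_bernoulliFun hodd (by omega),
    ← funext hprod, ← mul_assoc, ← mul_assoc, hconst] at hseries

theorem euclidean_volume_odd (n : ℕ) (hn : 2 ≤ n) :
    ∃ ε > 0, ∀ r : Fin (2 * n + 1) → ℝ, (∀ i, 0 < r i ∧ r i < ε) →
      (2 ^ (2 * n) / π) *
        ∑' k : ℕ, (∏ i, Real.sin (((k : ℝ) + 1) * r i)) / ((k : ℝ) + 1) ^ (2 * n - 1) =
      -(1 / (2 * (Nat.factorial (2 * n - 2) : ℝ))) *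
        ∑ I ∈ Finset.univ.filter (fun I : Finset (Fin (2 * n + 1)) => Odd I.card),
          Real.sign (∑ i ∈ I, r i - ∑ i ∈ Iᶜ, r i) *
            (∑ i ∈ I, r i - ∑ i ∈ Iᶜ, r i) ^ (2 * n - 2) := by
  obtain ⟨m, rfl⟩ : ∃ m, n = m + 1 := ⟨n - 1, by omega⟩
  refine ⟨2 * π / (2 * (m + 1) + 1), by positivity, fun r hr => ?_⟩
  have hr_sum : ∑ i, |r i| ≤ 2 * π := by
    calc ∑ i, |r i| ≤ ∑ _i : Fin (2 * (m + 1) + 1), 2 * π / (2 * (m + 1) + 1) :=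
          sum_le_sum fun i _ => (abs_of_pos (hr i).1).trans_le (hr i).2.le
      _ = 2 * π := by
        rw [sum_const, card_univ, Fintype.card_fin, nsmul_eq_mul]
        push_cast
        field_simp
  rw [show 2 * (m + 1) - 1 = 2 * m + 1 by omega, show 2 * (m + 1) - 2 = 2 * m by omega,
    (hasSum_prod_sin_succ_mul_div_pow (by omega) (Fintype.card_fin _) r hr_sum).tsum_eq]
  field_simp
  ring
end

section
/- Let n ≥ 4 be an integer and let x, y be real numbers with 0 < x ≤ y ≤ π/2. Then Σ_{k=1}^∞ (sin(kx))^n/k^{n−2} ≤ Σ_{k=1}^∞ (sin(ky))^n/k^{n−2}. That is, the function V_n(x) = (2^{n−1}/π)·Σ_{k=1}^∞ (sin(kx))^n/k^{n−2} is non-decreasing on the interval (0, π/2]. -/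
open Real Set

/-!
Write `sₖ = sin (k t)` and `V(t) = ∑ sₖⁿ / kⁿ⁻²`. For `n = 4` the Fourier series of the
Bernoulli polynomial `B₂` gives `V(t) = π t / 4` on `[0, π/2]`. For `n ≥ 5`, termwise
differentiation gives `V'(t) = (n/2) ∑ aₖ sₖ sin (2 k t)` with `aₖ = sₖ^q / k^q`, `q = n - 3 ≥ 2`,
so it suffices that `∑ aₖ sₖ sin (k d) ≥ 0` for `d ∈ [0, π]`. By product-to-sum this sum is
`(F(d - t) - F(d + t)) / 2`, where `F(e) = ∑ aₖ cos (k e)` is even and `2π`-periodic, so it is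
enough that `F` is antitone on `[0, π]`. For `q = 2`, `F` is explicit (`B₂` again); for `q > 2`,
`-F'` is the same kind of sum with `q - 1`, nonnegative by induction.
-/

noncomputable def cosSeries (a : ℕ → ℝ) (v : ℝ) : ℝ := ∑' k : ℕ, a k * cos (((k : ℝ) + 1) * v)

noncomputable def sinSeries (a : ℕ → ℝ) (v : ℝ) : ℝ := ∑' k : ℕ, a k * sin (((k : ℝ) + 1) * v)

lemma summable_one_div_succ_sq : Summable fun k : ℕ => 1 / ((k : ℝ) + 1) ^ 2 := by
  simpa using (summable_nat_add_iff 1).mpr (Real.summable_one_div_nat_pow.mpr one_lt_two)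

lemma abs_sin_pow_le_one (x : ℝ) (m : ℕ) : |sin x ^ m| ≤ 1 := by
  rw [abs_pow]
  exact pow_le_one₀ (abs_nonneg _) (abs_sin_le_one x)

lemma abs_div_succ_pow_le {c : ℝ} (hc : |c| ≤ 1) {q : ℕ} (hq : 2 ≤ q) (k : ℕ) :
    |c / ((k : ℝ) + 1) ^ q| ≤ 1 / ((k : ℝ) + 1) ^ 2 := by
  have hk : (1 : ℝ) ≤ (k : ℝ) + 1 := by linarith [k.cast_nonneg (α := ℝ)]
  rw [abs_div, abs_of_pos (by positivity : (0 : ℝ) < ((k : ℝ) + 1) ^ q)]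
  calc |c| / ((k : ℝ) + 1) ^ q ≤ 1 / ((k : ℝ) + 1) ^ q := by gcongr
    _ ≤ 1 / ((k : ℝ) + 1) ^ 2 := by gcongr

lemma summable_div_succ_pow {c : ℕ → ℝ} (hc : ∀ k, |c k| ≤ 1) {q : ℕ} (hq : 2 ≤ q) :
    Summable fun k : ℕ => c k / ((k : ℝ) + 1) ^ q :=
  summable_one_div_succ_sq.of_norm_bounded fun k => abs_div_succ_pow_le (hc k) hq k

section TrigSeries

variable {a : ℕ → ℝ}

lemma Summable.mul_cos_succ_mul (ha : Summable a) (v : ℝ) :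
    Summable fun k : ℕ => a k * cos (((k : ℝ) + 1) * v) :=
  ha.abs.of_norm_bounded fun k => by
    simpa [abs_mul] using mul_le_of_le_one_right (abs_nonneg (a k)) (abs_cos_le_one _)

lemma Summable.mul_sin_succ_mul (ha : Summable a) (v : ℝ) :
    Summable fun k : ℕ => a k * sin (((k : ℝ) + 1) * v) :=
  ha.abs.of_norm_bounded fun k => by
    simpa [abs_mul] using mul_le_of_le_one_right (abs_nonneg (a k)) (abs_sin_le_one _)

lemma hasSum_cosSeries (ha : Summable a) (v : ℝ) :
    HasSum (fun k : ℕ => a k * cos (((k : ℝ) + 1) * v)) (cosSeries a v) :=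
  (ha.mul_cos_succ_mul v).hasSum

lemma cosSeries_neg (a : ℕ → ℝ) (v : ℝ) : cosSeries a (-v) = cosSeries a v := by
  simp only [cosSeries, mul_neg, cos_neg]

lemma cosSeries_two_pi_sub (a : ℕ → ℝ) (v : ℝ) : cosSeries a (2 * π - v) = cosSeries a v := by
  refine tsum_congr fun k => ?_
  have h := cos_nat_mul_two_pi_sub (((k : ℝ) + 1) * v) (k + 1)
  push_cast at h
  rw [mul_sub, ← h]

lemma sinSeries_mul_sin (ha : Summable a) (t d : ℝ) :
    sinSeries (fun k => a k * sin (((k : ℝ) + 1) * t)) d =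
      (cosSeries a (d - t) - cosSeries a (d + t)) / 2 := by
  rw [← (((hasSum_cosSeries ha (d - t)).sub (hasSum_cosSeries ha (d + t))).div_const 2).tsum_eq]
  refine tsum_congr fun k => ?_
  rw [mul_sub, mul_add, cos_sub, cos_add]
  ring

lemma sinSeries_mul_sin_nonneg (ha : Summable a) (hanti : AntitoneOn (cosSeries a) (Icc 0 π))
    {t d : ℝ} (ht : t ∈ Icc 0 π) (hd : d ∈ Icc 0 π) :
    0 ≤ sinSeries (fun k => a k * sin (((k : ℝ) + 1) * t)) d := by
  obtain ⟨ht0, htπ⟩ := ht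
  obtain ⟨hd0, hdπ⟩ := hd
  -- fold `d - t` and `d + t` into `[0, π]` using evenness and `2π`-periodicity
  have hmin_le : min (d + t) (2 * π - (d + t)) ≤ π := by
    rcases le_total (d + t) π with h | h
    · exact min_le_of_left_le h
    · exact min_le_of_right_le (by linarith)
  have hle : cosSeries a (min (d + t) (2 * π - (d + t))) ≤ cosSeries a |d - t| :=
    hanti ⟨abs_nonneg _, abs_sub_le_iff.2 ⟨by linarith, by linarith⟩⟩
      ⟨le_min (by linarith) (by linarith), hmin_le⟩
      (le_min (abs_sub_le_iff.2 ⟨by linarith, by linarith⟩)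
        (abs_sub_le_iff.2 ⟨by linarith, by linarith⟩))
  have habs : cosSeries a |d - t| = cosSeries a (d - t) := by
    rcases abs_choice (d - t) with h | h <;> rw [h]
    exact cosSeries_neg a _
  have hmin : cosSeries a (min (d + t) (2 * π - (d + t))) = cosSeries a (d + t) := by
    rcases min_choice (d + t) (2 * π - (d + t)) with h | h <;> rw [h]
    exact cosSeries_two_pi_sub a _
  rw [sinSeries_mul_sin ha]
  linarith

lemma hasDerivAt_cosSeries (ha : Summable fun k : ℕ => ((k : ℝ) + 1) * a k) (v : ℝ) :
    HasDerivAt (cosSeries a) (-sinSeries (fun k => ((k : ℝ) + 1) * a k) v) v := by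
  have ha' : Summable a := ha.abs.of_norm_bounded fun k => by
    have hk : (1 : ℝ) ≤ (k : ℝ) + 1 := by linarith [k.cast_nonneg (α := ℝ)]
    simpa [abs_mul, abs_of_pos (by positivity : (0 : ℝ) < (k : ℝ) + 1)] using
      le_mul_of_one_le_left (abs_nonneg (a k)) hk
  rw [sinSeries, ← tsum_neg]
  refine hasDerivAt_tsum (g := fun k y => a k * cos (((k : ℝ) + 1) * y))
    (g' := fun k y => -(((k : ℝ) + 1) * a k * sin (((k : ℝ) + 1) * y))) ha.abs
    (fun k y => ?_) (fun k y => ?_) (ha'.mul_cos_succ_mul 0) v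
  · exact ((((hasDerivAt_id' y).const_mul ((k : ℝ) + 1)).cos).const_mul (a k)).congr_deriv
      (by ring)
  · rw [norm_neg, Real.norm_eq_abs, abs_mul _ (sin _)]
    exact mul_le_of_le_one_right (abs_nonneg _) (abs_sin_le_one _)

lemma antitoneOn_cosSeries (ha : Summable fun k : ℕ => ((k : ℝ) + 1) * a k)
    (hpos : ∀ v ∈ Ioo 0 π, 0 ≤ sinSeries (fun k => ((k : ℝ) + 1) * a k) v) :
    AntitoneOn (cosSeries a) (Icc 0 π) :=
  antitoneOn_of_hasDerivWithinAt_nonpos (convex_Icc 0 π)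
    (fun v _ => (hasDerivAt_cosSeries ha v).continuousAt.continuousWithinAt)
    (fun v _ => (hasDerivAt_cosSeries ha v).hasDerivWithinAt)
    (fun v hv => by rw [interior_Icc] at hv; linarith [hpos v hv])

end TrigSeries

-- The Fourier series of the Bernoulli polynomial `B₂`.
lemma cosSeries_one_div_sq {v : ℝ} (hv0 : 0 ≤ v) (hv : v ≤ 2 * π) :
    cosSeries (fun k => 1 / ((k : ℝ) + 1) ^ 2) v = π ^ 2 / 6 - π * v / 2 + v ^ 2 / 4 := by
  have hx : v / (2 * π) ∈ Icc (0 : ℝ) 1 := ⟨by positivity, (div_le_one (by positivity)).2 hv⟩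
  have h := (hasSum_nat_add_iff' 1).2 (hasSum_one_div_nat_pow_mul_cos one_ne_zero hx)
  change HasSum _ (_ * bernoulliFun (2 * 1) _ - _) at h
  norm_num [Nat.factorial] at h
  rw [show (2 * π) ^ 2 / 2 / 2 * ((v / (2 * π)) ^ 2 - v / (2 * π) + 1 / 6)
      = π ^ 2 / 6 - π * v / 2 + v ^ 2 / 4 by field_simp; ring] at h
  rw [← h.tsum_eq]
  refine tsum_congr fun k => ?_
  rw [show 2 * π * ((k : ℝ) + 1) * (v / (2 * π)) = ((k : ℝ) + 1) * v by field_simp]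
  simp only [one_div]

lemma sin_sq_mul_cos (θ φ : ℝ) :
    sin θ ^ 2 * cos φ = cos φ / 2 - (cos (φ - 2 * θ) + cos (φ + 2 * θ)) / 4 := by
  rw [cos_sub, cos_add, cos_two_mul, cos_sq']
  ring

lemma cosSeries_sin_sq_div_sq {t e : ℝ} (ht : t ∈ Icc 0 (π / 2)) (he : e ∈ Icc 0 π) :
    cosSeries (fun k => sin (((k : ℝ) + 1) * t) ^ 2 / ((k : ℝ) + 1) ^ 2) e =
      π / 4 * max (2 * t - e) 0 - t ^ 2 / 2 := by
  obtain ⟨ht0, htπ⟩ := ht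
  obtain ⟨he0, heπ⟩ := he
  have hC := hasSum_cosSeries summable_one_div_succ_sq
  have hsplit : cosSeries (fun k => sin (((k : ℝ) + 1) * t) ^ 2 / ((k : ℝ) + 1) ^ 2) e =
      cosSeries (fun k => 1 / ((k : ℝ) + 1) ^ 2) e / 2 -
        (cosSeries (fun k => 1 / ((k : ℝ) + 1) ^ 2) (e - 2 * t) +
          cosSeries (fun k => 1 / ((k : ℝ) + 1) ^ 2) (e + 2 * t)) / 4 := by
    rw [← (((hC e).div_const 2).sub
      (((hC (e - 2 * t)).add (hC (e + 2 * t))).div_const 4)).tsum_eq]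
    refine tsum_congr fun k => ?_
    rw [mul_sub, mul_add, mul_left_comm _ (2 : ℝ) t, div_mul_eq_mul_div, sin_sq_mul_cos]
    ring
  have hplus : cosSeries (fun k => 1 / ((k : ℝ) + 1) ^ 2) (e + 2 * t) =
      π ^ 2 / 6 - π * (e + 2 * t) / 2 + (e + 2 * t) ^ 2 / 4 :=
    cosSeries_one_div_sq (by linarith) (by linarith)
  rw [hsplit, hplus, cosSeries_one_div_sq he0 (by linarith)]
  rcases le_total (2 * t) e with h | h
  · rw [cosSeries_one_div_sq (by linarith) (by linarith), max_eq_right (by linarith)]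
    ring
  · rw [← cosSeries_neg, neg_sub, cosSeries_one_div_sq (by linarith) (by linarith),
      max_eq_left (by linarith)]
    ring

lemma antitoneOn_cosSeries_sin_pow_div_pow {t : ℝ} (ht : t ∈ Icc 0 (π / 2)) {q : ℕ}
    (hq : 2 ≤ q) :
    AntitoneOn (cosSeries fun k => sin (((k : ℝ) + 1) * t) ^ q / ((k : ℝ) + 1) ^ q)
      (Icc 0 π) := by
  induction q, hq using Nat.le_induction with
  | base =>
    intro e he e' he' hee'
    rw [cosSeries_sin_sq_div_sq ht he, cosSeries_sin_sq_div_sq ht he']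
    gcongr
  | succ q hq ih =>
    have hcoeff : (fun k : ℕ => ((k : ℝ) + 1) * (sin (((k : ℝ) + 1) * t) ^ (q + 1) /
        ((k : ℝ) + 1) ^ (q + 1))) =
        fun k : ℕ => sin (((k : ℝ) + 1) * t) ^ q / ((k : ℝ) + 1) ^ q *
          sin (((k : ℝ) + 1) * t) := by
      funext k
      field_simp
      ring
    have hsum : Summable fun k : ℕ => sin (((k : ℝ) + 1) * t) ^ q / ((k : ℝ) + 1) ^ q :=
      summable_div_succ_pow (fun k => abs_sin_pow_le_one _ _) hq
    refine antitoneOn_cosSeries (hcoeff ▸ hsum.mul_sin_succ_mul t) fun v hv => ?_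
    rw [hcoeff]
    exact sinSeries_mul_sin_nonneg hsum ih ⟨ht.1, by linarith [ht.2, pi_pos]⟩
      (Ioo_subset_Icc_self hv)

lemma hasDerivAt_sin_pow_div_pow (q k : ℕ) (t : ℝ) :
    HasDerivAt (fun t => sin (((k : ℝ) + 1) * t) ^ (q + 3) / ((k : ℝ) + 1) ^ (q + 1))
      (((q : ℝ) + 3) / 2 * (sin (((k : ℝ) + 1) * t) ^ q / ((k : ℝ) + 1) ^ q *
        sin (((k : ℝ) + 1) * t) * sin (((k : ℝ) + 1) * (2 * t)))) t := by
  refine ((((hasDerivAt_id' t).const_mul ((k : ℝ) + 1)).sin.pow (q + 3)).div_const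
    (((k : ℝ) + 1) ^ (q + 1))).congr_deriv ?_
  rw [mul_left_comm _ (2 : ℝ) t, sin_two_mul]
  push_cast
  field_simp
  ring

lemma monotoneOn_tsum_sin_pow_div_pow {n : ℕ} (hn : 5 ≤ n) :
    MonotoneOn (fun t => ∑' k : ℕ, sin (((k : ℝ) + 1) * t) ^ n / ((k : ℝ) + 1) ^ (n - 2))
      (Icc 0 (π / 2)) := by
  obtain ⟨q, rfl⟩ : ∃ q, n = q + 3 := ⟨n - 3, by omega⟩
  have hq : 2 ≤ q := by omega
  have hcoeff : ∀ t, Summable fun k : ℕ => sin (((k : ℝ) + 1) * t) ^ q / ((k : ℝ) + 1) ^ q :=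
    fun t => summable_div_succ_pow (fun k => abs_sin_pow_le_one _ _) hq
  have hderiv : ∀ t, HasDerivAt
      (fun t => ∑' k : ℕ, sin (((k : ℝ) + 1) * t) ^ (q + 3) / ((k : ℝ) + 1) ^ (q + 1))
      (((q : ℝ) + 3) / 2 * sinSeries (fun k => sin (((k : ℝ) + 1) * t) ^ q /
        ((k : ℝ) + 1) ^ q * sin (((k : ℝ) + 1) * t)) (2 * t)) t := by
    intro t
    rw [sinSeries, ← tsum_mul_left]
    refine hasDerivAt_tsum (summable_one_div_succ_sq.mul_left (((q : ℝ) + 3) / 2))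
      (fun k t => hasDerivAt_sin_pow_div_pow q k t) (fun k y => ?_)
      (summable_div_succ_pow (fun k => abs_sin_pow_le_one ((k + 1) * 0) _)
        (by omega : 2 ≤ q + 1)) t
    rw [Real.norm_eq_abs, abs_mul, abs_of_pos (by positivity : (0 : ℝ) < ((q : ℝ) + 3) / 2),
      show sin (((k : ℝ) + 1) * y) ^ q / ((k : ℝ) + 1) ^ q * sin (((k : ℝ) + 1) * y) *
        sin (((k : ℝ) + 1) * (2 * y)) = sin (((k : ℝ) + 1) * y) ^ (q + 1) *
        sin (((k : ℝ) + 1) * (2 * y)) / ((k : ℝ) + 1) ^ q by ring]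
    refine mul_le_mul_of_nonneg_left (abs_div_succ_pow_le ?_ hq k)
      (by positivity : (0 : ℝ) ≤ ((q : ℝ) + 3) / 2)
    rw [abs_mul]
    exact mul_le_one₀ (abs_sin_pow_le_one _ _) (abs_nonneg _) (abs_sin_le_one _)
  refine monotoneOn_of_hasDerivWithinAt_nonneg (convex_Icc _ _)
    (fun t _ => (hderiv t).continuousAt.continuousWithinAt)
    (fun t _ => (hderiv t).hasDerivWithinAt) fun t ht => ?_
  rw [interior_Icc] at ht
  exact mul_nonneg (by positivity) (sinSeries_mul_sin_nonneg (hcoeff t)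
    (antitoneOn_cosSeries_sin_pow_div_pow (Ioo_subset_Icc_self ht) hq)
    ⟨ht.1.le, by linarith [ht.2, pi_pos]⟩ ⟨by linarith [ht.1], by linarith [ht.2]⟩)

lemma tsum_sin_pow_four_div_sq {x : ℝ} (hx : x ∈ Icc 0 (π / 2)) :
    ∑' k : ℕ, sin (((k : ℝ) + 1) * x) ^ 4 / ((k : ℝ) + 1) ^ 2 = π * x / 4 := by
  have ha : Summable fun k : ℕ => sin (((k : ℝ) + 1) * x) ^ 2 / ((k : ℝ) + 1) ^ 2 :=
    summable_div_succ_pow (fun k => abs_sin_pow_le_one _ _) le_rfl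
  have h := ((hasSum_cosSeries ha 0).sub (hasSum_cosSeries ha (2 * x))).div_const 2
  rw [cosSeries_sin_sq_div_sq hx ⟨le_rfl, pi_pos.le⟩,
    cosSeries_sin_sq_div_sq hx ⟨by linarith [hx.1], by linarith [hx.2]⟩] at h
  rw [sub_zero, sub_self, max_eq_left (by linarith [hx.1]), max_self] at h
  rw [show π * x / 4 = (π / 4 * (2 * x) - x ^ 2 / 2 - (π / 4 * 0 - x ^ 2 / 2)) / 2 by ring,
    ← h.tsum_eq]
  refine tsum_congr fun k => ?_
  rw [mul_zero, cos_zero, mul_left_comm _ (2 : ℝ) x, cos_two_mul', cos_sq']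
  ring

theorem V_n_monotone_left (n : ℕ) (hn : 4 ≤ n) (x y : ℝ)
    (hx : 0 < x) (hxy : x ≤ y) (hy : y ≤ π / 2) :
    ∑' k : ℕ, (Real.sin (((k : ℝ) + 1) * x)) ^ n / ((k : ℝ) + 1) ^ (n - 2) ≤
      ∑' k : ℕ, (Real.sin (((k : ℝ) + 1) * y)) ^ n / ((k : ℝ) + 1) ^ (n - 2) := by
  have hxI : x ∈ Icc 0 (π / 2) := ⟨hx.le, hxy.trans hy⟩
  have hyI : y ∈ Icc 0 (π / 2) := ⟨hx.le.trans hxy, hy⟩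
  rcases hn.eq_or_lt with rfl | h5
  · rw [tsum_sin_pow_four_div_sq hxI, tsum_sin_pow_four_div_sq hyI]
    gcongr
  · exact monotoneOn_tsum_sin_pow_div_pow h5 hxI hyI hxy
end

section
/- Let n ≥ 4 be an integer and let x, y be real numbers with π/2 ≤ x ≤ y < π. Then Σ_{k=1}^∞ (sin(kx))^n/k^{n−2} ≥ Σ_{k=1}^∞ (sin(ky))^n/k^{n−2}. That is, the function V_n(x) = (2^{n−1}/π)·Σ_{k=1}^∞ (sin(kx))^n/k^{n−2} is non-increasing on the interval [π/2, π). -/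
/-!
With `K = k + 1`, the identity `2 sin² (K z) = 1 - cos (2 K z)` writes the series as
`F_s (2 z) / 2`, where `F_s c = ∑ (1 - cos (K c)) ∏_{r ∈ s} sin (K r) / K ^ |s|`
(`oneSubCosSeries (sinWeight s)`) and `s` consists of `n - 2` copies of `z`.

For `|s| ≥ 2` and angles in `[0, π]`, `F_s` is even, `2π`-periodic and monotone on `[0, π]`.
For two angles this is read off a closed form coming from
`∑ cos (K θ) / K² = π²/6 - πθ/2 + θ²/4` on `[0, 2π]`; adding an angle `r` gives
`∂_c F_{r::s} c = (F_s (c + r) - F_s (c - r)) / 2 ≥ 0`. Hence `F_s (2y) ≤ F_s (2x)`. Moreover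
`∂_r F_{r::s} (2x) = (F_s (r + 2x) + F_s (r - 2x)) / 2 - F_s r ≤ 0` for `r ∈ [x, y]`, so
replacing the copies of `y` by copies of `x` one at a time only increases `F (2x)`. This needs
`n ≥ 5`; for `n = 4` the closed form gives the value `π (π - z) / 4` directly.
-/

open Real Set

noncomputable section

theorem hasSum_cos_div_sq {θ : ℝ} (h₀ : 0 ≤ θ) (h₁ : θ ≤ 2 * π) :
    HasSum (fun k : ℕ => cos ((k + 1) * θ) / (k + 1) ^ 2) (π ^ 2 / 6 - π * θ / 2 + θ ^ 2 / 4) := by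
  have hθ : θ / (2 * π) ∈ Icc (0 : ℝ) 1 :=
    ⟨by positivity, (div_le_one (by positivity)).mpr h₁⟩
  have h := hasSum_one_div_nat_pow_mul_cos one_ne_zero hθ
  rw [← bernoulliFun, Nat.mul_one, bernoulliFun_two] at h
  have h' := (hasSum_nat_add_iff' 1).mpr h
  simp only [Finset.range_one, Finset.sum_singleton, CharP.cast_eq_zero, Nat.cast_add,
    Nat.cast_one, zero_pow two_ne_zero, div_zero, zero_mul, sub_zero] at h'
  rw [show (-1 : ℝ) ^ (1 + 1) * (2 * π) ^ 2 / 2 / (Nat.factorial 2 : ℕ) *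
      ((θ / (2 * π)) ^ 2 - θ / (2 * π) + 6⁻¹) = π ^ 2 / 6 - π * θ / 2 + θ ^ 2 / 4 by
    norm_num [Nat.factorial]; field_simp; ring] at h'
  refine h'.congr_fun fun k => ?_
  rw [show 2 * π * (k + 1) * (θ / (2 * π)) = (k + 1) * θ by field_simp]
  ring

theorem cos_mul_abs {K : ℝ} (hK : 0 ≤ K) (x : ℝ) : cos (K * |x|) = cos (K * x) := by
  rw [← abs_of_nonneg hK, ← abs_mul, cos_abs, abs_of_nonneg hK]

theorem hasSum_one_sub_cos_mul_cos_div_sq {c w : ℝ} (hc : c ∈ Icc 0 π) (hw : w ∈ Icc 0 π) :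
    HasSum (fun k : ℕ => (1 - cos ((k + 1) * c)) * cos ((k + 1) * w) / (k + 1) ^ 2)
      ((π * (max c w - w) - c ^ 2 / 2) / 2) := by
  obtain ⟨hc₀, hcπ⟩ := hc
  obtain ⟨hw₀, hwπ⟩ := hw
  have hdiff : |c - w| ≤ 2 * π := by rw [abs_le]; constructor <;> linarith
  have h := (hasSum_cos_div_sq hw₀ (by linarith)).sub
    (((hasSum_cos_div_sq (θ := c + w) (by linarith) (by linarith)).add
      (hasSum_cos_div_sq (abs_nonneg _) hdiff)).div_const 2)
  have hval : (π * (max c w - w) - c ^ 2 / 2) / 2 = π ^ 2 / 6 - π * w / 2 + w ^ 2 / 4 -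
      (π ^ 2 / 6 - π * (c + w) / 2 + (c + w) ^ 2 / 4 +
        (π ^ 2 / 6 - π * |c - w| / 2 + |c - w| ^ 2 / 4)) / 2 := by
    rcases le_total c w with h | h
    · rw [max_eq_right h, abs_of_nonpos (by linarith)]; ring
    · rw [max_eq_left h, abs_of_nonneg (by linarith)]; ring
  rw [hval]
  refine h.congr_fun fun k => ?_
  rw [cos_mul_abs (by positivity), mul_add, mul_sub, cos_add, cos_sub]
  ring

def oneSubCosSeries (w : ℕ → ℝ) (c : ℝ) : ℝ := ∑' k : ℕ, (1 - cos ((k + 1) * c)) * w k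

theorem oneSubCosSeries_even (w : ℕ → ℝ) : (oneSubCosSeries w).Even := fun c => by
  simp only [oneSubCosSeries, mul_neg, cos_neg]

theorem oneSubCosSeries_periodic (w : ℕ → ℝ) : (oneSubCosSeries w).Periodic (2 * π) := fun c => by
  simp only [oneSubCosSeries, mul_add]
  congr with k
  rw [show ((k : ℝ) + 1) * (2 * π) = ((k + 1 : ℕ) : ℝ) * (2 * π) by push_cast; ring,
    cos_add_nat_mul_two_pi]

theorem le_of_monotoneOn_of_even_of_periodic {f : ℝ → ℝ} (heven : f.Even)
    (hper : f.Periodic (2 * π)) (hmono : MonotoneOn f (Icc 0 π)) {t u : ℝ} (htu : |t| ≤ u)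
    (hut : |t| ≤ 2 * π - u) : f t ≤ f u := by
  have habs : f t = f |t| := by
    rcases abs_cases t with ⟨h, -⟩ | ⟨h, -⟩ <;> rw [h]
    exact (heven t).symm
  have ht := abs_nonneg t
  rw [habs]
  rcases le_total u π with hu | hu
  · exact hmono ⟨ht, by linarith⟩ ⟨by linarith, hu⟩ htu
  · rw [← heven u, ← hper.sub_eq']
    exact hmono ⟨ht, by linarith⟩ ⟨by linarith, by linarith⟩ (by linarith)

theorem abs_one_sub_cos_le (x : ℝ) : |1 - cos x| ≤ 2 := by
  rw [abs_le]; constructor <;> linarith [neg_one_le_cos x, cos_le_one x]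

theorem summable_one_sub_cos_mul {w : ℕ → ℝ} (hw : Summable w) (c : ℝ) :
    Summable fun k : ℕ => (1 - cos ((k + 1) * c)) * w k :=
  (hw.abs.mul_left 2).of_norm_bounded fun k => by
    rw [norm_mul]
    exact mul_le_mul_of_nonneg_right (abs_one_sub_cos_le _) (abs_nonneg _)

def consWeight (r : ℝ) (w : ℕ → ℝ) (k : ℕ) : ℝ := sin ((k + 1) * r) * w k / (k + 1)

theorem hasDerivAt_oneSubCosSeries_consWeight {w : ℕ → ℝ} (hw : Summable w) (r c : ℝ) :
    HasDerivAt (oneSubCosSeries (consWeight r w))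
      ((oneSubCosSeries w (c + r) - oneSubCosSeries w (c - r)) / 2) c := by
  have hterm : ∀ (k : ℕ) (t : ℝ), HasDerivAt (fun t => (1 - cos ((k + 1) * t)) * consWeight r w k)
      (sin ((k + 1) * t) * sin ((k + 1) * r) * w k) t := by
    intro k t
    have hk : (k + 1 : ℝ) ≠ 0 := by positivity
    refine ((((hasDerivAt_id t).const_mul (k + 1 : ℝ)).cos.const_sub 1).mul_const
      (consWeight r w k)).congr_deriv ?_
    simp only [consWeight, id, mul_one]
    field_simp
  have hbound : ∀ (k : ℕ) (t : ℝ), ‖sin ((k + 1) * t) * sin ((k + 1) * r) * w k‖ ≤ |w k| := by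
    intro k t
    rw [norm_mul, norm_mul]
    exact mul_le_of_le_one_left (abs_nonneg _)
      (mul_le_one₀ (abs_sin_le_one _) (norm_nonneg _) (abs_sin_le_one _))
  refine (hasDerivAt_tsum hw.abs hterm hbound (y₀ := 0) (by simp) c).congr_deriv ?_
  rw [oneSubCosSeries, oneSubCosSeries, ← (summable_one_sub_cos_mul hw _).tsum_sub
    (summable_one_sub_cos_mul hw _), ← tsum_div_const]
  congr with k
  rw [mul_add, mul_sub, cos_add, cos_sub]
  ring

theorem hasDerivAt_oneSubCosSeries_consWeight_slot {w : ℕ → ℝ} (hw : Summable w) (c r : ℝ) :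
    HasDerivAt (fun r => oneSubCosSeries (consWeight r w) c)
      ((oneSubCosSeries w (r + c) + oneSubCosSeries w (r - c)) / 2 - oneSubCosSeries w r) r := by
  have hterm : ∀ (k : ℕ) (t : ℝ),
      HasDerivAt (fun t => (1 - cos ((k + 1) * c)) * consWeight t w k)
        ((1 - cos ((k + 1) * c)) * cos ((k + 1) * t) * w k) t := by
    intro k t
    have hk : (k + 1 : ℝ) ≠ 0 := by positivity
    refine (((((hasDerivAt_id t).const_mul (k + 1 : ℝ)).sin.mul_const (w k)).div_const
      (k + 1 : ℝ)).const_mul (1 - cos ((k + 1) * c))).congr_deriv ?_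
    simp only [id, mul_one]
    field_simp
  have hbound : ∀ (k : ℕ) (t : ℝ),
      ‖(1 - cos ((k + 1) * c)) * cos ((k + 1) * t) * w k‖ ≤ 2 * |w k| := by
    intro k t
    rw [norm_mul, norm_mul]
    exact mul_le_mul_of_nonneg_right ((mul_le_of_le_one_right (abs_nonneg _)
      (abs_cos_le_one _)).trans (abs_one_sub_cos_le _)) (abs_nonneg _)
  refine (hasDerivAt_tsum (hw.abs.mul_left 2) hterm hbound (y₀ := 0) (by simp [consWeight])
    r).congr_deriv ?_
  have hs := summable_one_sub_cos_mul hw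
  rw [oneSubCosSeries, oneSubCosSeries, oneSubCosSeries, ← (hs _).tsum_add (hs _),
    ← tsum_div_const, ← ((hs _).add (hs _) |>.div_const 2).tsum_sub (hs _)]
  congr with k
  rw [mul_add, mul_sub, cos_add, cos_sub]
  ring

theorem monotoneOn_oneSubCosSeries_consWeight {w : ℕ → ℝ} (hw : Summable w)
    (hmono : MonotoneOn (oneSubCosSeries w) (Icc 0 π)) {r : ℝ} (hr : r ∈ Icc 0 π) :
    MonotoneOn (oneSubCosSeries (consWeight r w)) (Icc 0 π) := by
  have hderiv := hasDerivAt_oneSubCosSeries_consWeight hw r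
  refine monotoneOn_of_hasDerivWithinAt_nonneg (convex_Icc 0 π)
    (fun c _ => (hderiv c).continuousAt.continuousWithinAt)
    (fun c _ => (hderiv c).hasDerivWithinAt) fun c hc => ?_
  obtain ⟨hc₀, hcπ⟩ : c ∈ Ioo 0 π := by rwa [interior_Icc] at hc
  obtain ⟨hr₀, hrπ⟩ := hr
  have hle : oneSubCosSeries w (c - r) ≤ oneSubCosSeries w (c + r) :=
    le_of_monotoneOn_of_even_of_periodic (oneSubCosSeries_even w) (oneSubCosSeries_periodic w)
      hmono (abs_le.mpr ⟨by linarith, by linarith⟩) (abs_le.mpr ⟨by linarith, by linarith⟩)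
  linarith

def sinWeight (s : Multiset ℝ) (k : ℕ) : ℝ :=
  (s.map fun r => sin ((k + 1) * r)).prod / (k + 1) ^ Multiset.card s

theorem sinWeight_cons (r : ℝ) (s : Multiset ℝ) :
    sinWeight (r ::ₘ s) = consWeight r (sinWeight s) := by
  funext k
  simp only [sinWeight, consWeight, Multiset.map_cons, Multiset.prod_cons, Multiset.card_cons,
    pow_succ]
  field_simp

theorem abs_sinWeight_le (s : Multiset ℝ) (k : ℕ) :
    |sinWeight s k| ≤ 1 / (k + 1) ^ Multiset.card s := by
  have hprod : |(s.map fun r => sin ((k + 1) * r)).prod| ≤ 1 := by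
    induction s using Multiset.induction_on with
    | empty => simp
    | cons r s ih =>
      rw [Multiset.map_cons, Multiset.prod_cons, abs_mul]
      exact mul_le_one₀ (abs_sin_le_one _) (abs_nonneg _) ih
  have hk : (0 : ℝ) < (k + 1) ^ Multiset.card s := by positivity
  rw [sinWeight, abs_div, abs_of_pos hk]
  exact div_le_div_of_nonneg_right hprod hk.le

theorem summable_sinWeight {s : Multiset ℝ} (hs : 2 ≤ Multiset.card s) :
    Summable (sinWeight s) := by
  have hsq : Summable fun k : ℕ => 1 / ((k : ℝ) + 1) ^ 2 := by
    simpa using (summable_nat_add_iff 1).mpr (Real.summable_one_div_nat_pow.mpr one_lt_two)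
  refine hsq.of_norm_bounded fun k => (abs_sinWeight_le s k).trans ?_
  gcongr
  exact le_add_of_nonneg_left k.cast_nonneg

theorem oneSubCosSeries_sinWeight_pair {a b c : ℝ} (ha : a ∈ Icc 0 π) (hb : b ∈ Icc 0 π)
    (hc : c ∈ Icc 0 π) :
    oneSubCosSeries (sinWeight {a, b}) c = π / 4 * (max c |a - b| - |a - b| -
      (max c (min (a + b) (2 * π - (a + b))) - min (a + b) (2 * π - (a + b)))) := by
  obtain ⟨ha₀, haπ⟩ := ha
  obtain ⟨hb₀, hbπ⟩ := hb
  set v := min (a + b) (2 * π - (a + b)) with hv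
  have hv₀ : 0 ≤ v := le_min (by linarith) (by linarith)
  have hvπ : v ≤ π := by rw [hv, min_le_iff]; by_contra! h; linarith
  have hcos_sum : ∀ k : ℕ, cos ((k + 1) * (a + b)) = cos ((k + 1) * v) := by
    intro k
    rcases min_cases (a + b) (2 * π - (a + b)) with ⟨h, -⟩ | ⟨h, -⟩ <;> rw [hv, h]
    rw [← cos_nat_mul_two_pi_sub ((k + 1) * (a + b)) (k + 1)]
    push_cast
    ring_nf
  have h := ((hasSum_one_sub_cos_mul_cos_div_sq hc ⟨abs_nonneg (a - b), abs_le.mpr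
    ⟨by linarith, by linarith⟩⟩).sub (hasSum_one_sub_cos_mul_cos_div_sq hc ⟨hv₀, hvπ⟩)).div_const 2
  refine ((h.congr_fun fun k => ?_).tsum_eq).trans (by ring)
  simp only [sinWeight, Multiset.insert_eq_cons, Multiset.map_cons, Multiset.map_singleton,
    Multiset.prod_cons, Multiset.prod_singleton, Multiset.card_cons, Multiset.card_singleton]
  rw [← hcos_sum, cos_mul_abs (by positivity), mul_sub, mul_add, cos_add, cos_sub]
  ring

theorem monotoneOn_oneSubCosSeries_sinWeight_pair {a b : ℝ} (ha : a ∈ Icc 0 π)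
    (hb : b ∈ Icc 0 π) : MonotoneOn (oneSubCosSeries (sinWeight {a, b})) (Icc 0 π) := by
  intro c hc c' hc' hcc'
  rw [oneSubCosSeries_sinWeight_pair ha hb hc, oneSubCosSeries_sinWeight_pair ha hb hc']
  obtain ⟨ha₀, haπ⟩ := ha
  obtain ⟨hb₀, hbπ⟩ := hb
  have hle : |a - b| ≤ min (a + b) (2 * π - (a + b)) :=
    le_min (abs_le.mpr ⟨by linarith, by linarith⟩) (abs_le.mpr ⟨by linarith, by linarith⟩)
  have hmax : ∀ {u v : ℝ}, u ≤ v → max c u - max c v ≤ max c' u - max c' v := by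
    intro u v huv
    simp only [max_def]
    split_ifs <;> linarith
  exact mul_le_mul_of_nonneg_left (by linarith [hmax hle]) (by positivity)

theorem monotoneOn_oneSubCosSeries_sinWeight {s : Multiset ℝ} (hs : 2 ≤ Multiset.card s)
    (hmem : ∀ r ∈ s, r ∈ Icc 0 π) : MonotoneOn (oneSubCosSeries (sinWeight s)) (Icc 0 π) := by
  induction s using Multiset.induction_on with
  | empty => simp at hs
  | cons r s ih =>
    rw [Multiset.forall_mem_cons] at hmem
    rw [Multiset.card_cons] at hs
    rcases (by omega : 2 ≤ Multiset.card s ∨ Multiset.card s = 1) with hs | hs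
    · rw [sinWeight_cons]
      exact monotoneOn_oneSubCosSeries_consWeight (summable_sinWeight hs) (ih hs hmem.2) hmem.1
    · obtain ⟨b, rfl⟩ := Multiset.card_eq_one.mp hs
      exact monotoneOn_oneSubCosSeries_sinWeight_pair hmem.1
        (hmem.2 b (Multiset.mem_singleton_self b))

theorem oneSubCosSeries_two_mul_le {s : Multiset ℝ} (hs : 2 ≤ Multiset.card s)
    (hmem : ∀ r ∈ s, r ∈ Icc 0 π) {x y : ℝ} (hx : π / 2 ≤ x) (hxy : x ≤ y) (hy : y ≤ π) :
    oneSubCosSeries (sinWeight s) (2 * y) ≤ oneSubCosSeries (sinWeight s) (2 * x) := by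
  rw [← (oneSubCosSeries_periodic _).sub_eq]
  exact le_of_monotoneOn_of_even_of_periodic (oneSubCosSeries_even _) (oneSubCosSeries_periodic _)
    (monotoneOn_oneSubCosSeries_sinWeight hs hmem) (abs_le.mpr ⟨by linarith, by linarith⟩)
    (abs_le.mpr ⟨by linarith, by linarith⟩)

theorem oneSubCosSeries_sinWeight_cons_le {s : Multiset ℝ} (hs : 2 ≤ Multiset.card s)
    (hmem : ∀ r ∈ s, r ∈ Icc 0 π) {x y : ℝ} (hx : π / 2 ≤ x) (hxy : x ≤ y) (hy : y ≤ π) :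
    oneSubCosSeries (sinWeight (y ::ₘ s)) (2 * x) ≤
      oneSubCosSeries (sinWeight (x ::ₘ s)) (2 * x) := by
  set f := oneSubCosSeries (sinWeight s)
  have hper : f.Periodic (2 * π) := oneSubCosSeries_periodic _
  have hle : ∀ {t u : ℝ}, |t| ≤ u → |t| ≤ 2 * π - u → f t ≤ f u :=
    le_of_monotoneOn_of_even_of_periodic (oneSubCosSeries_even _) hper
      (monotoneOn_oneSubCosSeries_sinWeight hs hmem)
  have hderiv := hasDerivAt_oneSubCosSeries_consWeight_slot (summable_sinWeight hs) (2 * x)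
  simp only [sinWeight_cons]
  refine antitoneOn_of_hasDerivWithinAt_nonpos (convex_Icc x y)
    (fun r _ => (hderiv r).continuousAt.continuousWithinAt)
    (fun r _ => (hderiv r).hasDerivWithinAt) (fun r hr => ?_)
    ⟨le_rfl, hxy⟩ ⟨hxy, le_rfl⟩ hxy
  obtain ⟨hxr, hry⟩ : r ∈ Ioo x y := by rwa [interior_Icc] at hr
  have h_add : f (r + 2 * x) ≤ f r := by
    rw [← hper.sub_eq]
    exact hle (abs_le.mpr ⟨by linarith, by linarith⟩) (abs_le.mpr ⟨by linarith, by linarith⟩)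
  have h_sub : f (r - 2 * x) ≤ f r :=
    hle (abs_le.mpr ⟨by linarith, by linarith⟩) (abs_le.mpr ⟨by linarith, by linarith⟩)
  linarith

theorem oneSubCosSeries_sinWeight_replicate_add_le {x y : ℝ} (hx : π / 2 ≤ x) (hxy : x ≤ y)
    (hy : y ≤ π) (i : ℕ) {u : Multiset ℝ} (hu : ∀ r ∈ u, r ∈ Icc 0 π)
    (hcard : 3 ≤ i + Multiset.card u) :
    oneSubCosSeries (sinWeight (Multiset.replicate i y + u)) (2 * x) ≤
      oneSubCosSeries (sinWeight (Multiset.replicate i x + u)) (2 * x) := by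
  induction i generalizing u with
  | zero => rfl
  | succ i ih =>
    have hx' : x ∈ Icc 0 π := ⟨by linarith [pi_pos], by linarith⟩
    have hrest : ∀ r ∈ Multiset.replicate i y + u, r ∈ Icc 0 π := by
      intro r hr
      rcases Multiset.mem_add.mp hr with hr | hr
      · rw [Multiset.eq_of_mem_replicate hr]; exact ⟨by linarith [pi_pos], hy⟩
      · exact hu r hr
    calc oneSubCosSeries (sinWeight (Multiset.replicate (i + 1) y + u)) (2 * x)
        = oneSubCosSeries (sinWeight (y ::ₘ (Multiset.replicate i y + u))) (2 * x) := by
          rw [Multiset.replicate_succ, Multiset.cons_add]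
      _ ≤ oneSubCosSeries (sinWeight (x ::ₘ (Multiset.replicate i y + u))) (2 * x) :=
          oneSubCosSeries_sinWeight_cons_le (by simp; omega) hrest hx hxy hy
      _ = oneSubCosSeries (sinWeight (Multiset.replicate i y + x ::ₘ u)) (2 * x) := by
          rw [Multiset.add_cons]
      _ ≤ oneSubCosSeries (sinWeight (Multiset.replicate i x + x ::ₘ u)) (2 * x) :=
          ih (Multiset.forall_mem_cons.mpr ⟨hx', hu⟩) (by simp; omega)
      _ = oneSubCosSeries (sinWeight (Multiset.replicate (i + 1) x + u)) (2 * x) := by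
          rw [Multiset.add_cons, ← Multiset.cons_add, ← Multiset.replicate_succ]

theorem tsum_sin_pow_div_pow (m : ℕ) (z : ℝ) :
    ∑' k : ℕ, sin ((k + 1) * z) ^ (m + 2) / (k + 1) ^ m =
      oneSubCosSeries (sinWeight (Multiset.replicate m z)) (2 * z) / 2 := by
  rw [oneSubCosSeries, ← tsum_div_const]
  congr with k
  simp only [sinWeight, Multiset.map_replicate, Multiset.prod_replicate, Multiset.card_replicate]
  rw [mul_left_comm, cos_two_mul, cos_sq']
  ring

theorem oneSubCosSeries_sinWeight_replicate_two {z : ℝ} (hz : π / 2 ≤ z) (hzπ : z ≤ π) :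
    oneSubCosSeries (sinWeight (Multiset.replicate 2 z)) (2 * z) = π * (π - z) / 2 := by
  have hc : 2 * π - 2 * z ∈ Icc 0 π := ⟨by linarith, by linarith⟩
  have hz' : z ∈ Icc 0 π := ⟨by linarith [pi_pos], hzπ⟩
  rw [← oneSubCosSeries_even, ← (oneSubCosSeries_periodic _).sub_eq', Multiset.replicate_succ,
    Multiset.replicate_one, ← Multiset.insert_eq_cons, oneSubCosSeries_sinWeight_pair hz' hz' hc,
    sub_self, abs_zero, min_eq_right (by linarith), ← two_mul, max_self, max_eq_left hc.1]
  ring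

theorem V_n_antitone_right (n : ℕ) (hn : 4 ≤ n) (x y : ℝ)
    (hx : π / 2 ≤ x) (hxy : x ≤ y) (hy : y < π) :
    ∑' k : ℕ, (Real.sin (((k : ℝ) + 1) * y)) ^ n / ((k : ℝ) + 1) ^ (n - 2) ≤
      ∑' k : ℕ, (Real.sin (((k : ℝ) + 1) * x)) ^ n / ((k : ℝ) + 1) ^ (n - 2) := by
  obtain ⟨m, rfl⟩ : ∃ m, n = m + 2 := ⟨n - 2, by omega⟩
  rw [Nat.add_sub_cancel, tsum_sin_pow_div_pow, tsum_sin_pow_div_pow]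
  gcongr ?_ / 2
  rcases (by omega : m = 2 ∨ 3 ≤ m) with rfl | hm
  · rw [oneSubCosSeries_sinWeight_replicate_two hx (by linarith),
      oneSubCosSeries_sinWeight_replicate_two (hx.trans hxy) hy.le]
    gcongr
  · have hmem : ∀ r ∈ Multiset.replicate m y, r ∈ Icc 0 π := fun r hr => by
      rw [Multiset.eq_of_mem_replicate hr]
      exact ⟨by linarith [pi_pos], hy.le⟩
    calc _ ≤ oneSubCosSeries (sinWeight (Multiset.replicate m y)) (2 * x) :=
          oneSubCosSeries_two_mul_le (by simp; omega) hmem hx hxy hy.le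
      _ ≤ _ := by
          simpa using oneSubCosSeries_sinWeight_replicate_add_le hx hxy hy.le m
            (u := 0) (by simp) (by simpa using hm)
end
end
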